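/- arXiv:2504.16154 — 7 statements merged into one kernel-verified Lean document; each statement's English description precedes it below -/
import Mathlib

section
/- Let f : [0,1] → [0,1] be continuous, {θₙ} a sequence in [0,1], and {rₙ} a real sequence. Suppose the sequence {xₙ} in [0,1] satisfies x_{n+1} = (1-θₙ)xₙ + θₙ f(xₙ) + rₙ for all n. If (1) θₙ → 0, (2) ∑ θₙ diverges, (3) rₙ/θₙ → 0, and (4) ∑ rₙ converges, then {xₙ} converges to a fixed point of f. -/
open Filter Set Topology

/-- If the steps tend to zero, partial sums of `r` are Cauchy, and inside the band `[u,v]`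
each step is at least `r n`, then the sequence cannot be frequently above `v` and
frequently below `u`. -/
lemma no_down_crossing (x r : ℕ → ℝ) (u v : ℝ) (huv : u < v)
    (hd : Tendsto (fun n => x (n + 1) - x n) atTop (nhds 0))
    (hr : CauchySeq (fun N => ∑ k ∈ Finset.range N, r k))
    (hstep : ∀ n, x n ∈ Set.Icc u v → r n ≤ x (n + 1) - x n)
    (hfb : ∃ᶠ n in atTop, x n < u)
    (hfa : ∃ᶠ n in atTop, v < x n) : False := by
  classical
  set ε := (v - u) / 3 with hεdef
  have hε0 : 0 < ε := by have := sub_pos.2 huv; positivity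
  obtain ⟨N1, hN1⟩ := Metric.tendsto_atTop.mp hd ε hε0
  obtain ⟨N2, hN2⟩ := Metric.cauchySeq_iff.mp hr ε hε0
  obtain ⟨n0, hn0v, hn0N⟩ := (hfa.and_eventually (eventually_ge_atTop (max N1 N2))).exists
  have hex : ∃ k, n0 < k ∧ x k < u := by
    obtain ⟨m, hmu, hmge⟩ := (hfb.and_eventually (eventually_ge_atTop (n0 + 1))).exists
    exact ⟨m, Nat.lt_of_succ_le hmge, hmu⟩
  set m' := Nat.find hex with hm'def
  obtain ⟨hn0m', hm'u⟩ : n0 < m' ∧ x m' < u := Nat.find_spec hex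
  have hmin : ∀ k, n0 < k → k < m' → u ≤ x k := by
    intro k hk1 hk2
    by_contra h
    exact Nat.find_min hex hk2 ⟨hk1, lt_of_not_ge h⟩
  set P : ℕ → Prop := fun k => v < x k with hPdef
  have hn0le : n0 ≤ m' - 1 := Nat.le_sub_one_of_lt hn0m'
  set n' := Nat.findGreatest P (m' - 1) with hn'def
  have hPn'' : P n' := Nat.findGreatest_spec (P := P) hn0le hn0v
  have hn'ge : n0 ≤ n' := Nat.le_findGreatest (P := P) hn0le hn0v
  have hn'm : n' + 1 ≤ m' := by
    have h1 : n' ≤ m' - 1 := Nat.findGreatest_le _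
    omega
  have hband : ∀ k, n' < k → k < m' → x k ∈ Set.Icc u v := by
    intro k h1 h2
    refine ⟨hmin k (lt_of_le_of_lt hn'ge h1) h2, ?_⟩
    have := Nat.findGreatest_is_greatest (n := m' - 1) (P := P) h1 (by omega)
    exact le_of_not_gt this
  have htel : x m' - x (n' + 1) = ∑ k ∈ Finset.Ico (n' + 1) m', (x (k + 1) - x k) := by
    rw [Finset.sum_Ico_eq_sub _ hn'm, Finset.sum_range_sub, Finset.sum_range_sub]
    ring
  have hsum_ge : ∑ k ∈ Finset.Ico (n' + 1) m', r k
      ≤ ∑ k ∈ Finset.Ico (n' + 1) m', (x (k + 1) - x k) := by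
    refine Finset.sum_le_sum fun k hk => ?_
    rw [Finset.mem_Ico] at hk
    exact hstep k (hband k (Nat.lt_of_succ_le hk.1) hk.2)
  have hrIco : ∑ k ∈ Finset.Ico (n' + 1) m', r k
      = (∑ k ∈ Finset.range m', r k) - ∑ k ∈ Finset.range (n' + 1), r k := by
    rw [Finset.sum_Ico_eq_sub _ hn'm]
  have hN2' : |(∑ k ∈ Finset.range m', r k) - ∑ k ∈ Finset.range (n' + 1), r k| < ε := by
    have h1 : N2 ≤ m' := le_trans (le_trans (le_max_right N1 N2) hn0N) (le_of_lt hn0m')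
    have h2 : N2 ≤ n' + 1 :=
      le_trans (le_trans (le_max_right N1 N2) hn0N) (le_trans hn'ge (Nat.le_succ n'))
    have := hN2 m' h1 (n' + 1) h2
    rwa [Real.dist_eq] at this
  have hPn' : v < x n' := hPn''
  have hstep0 : v - ε < x (n' + 1) := by
    have h1 : N1 ≤ n' := le_trans (le_trans (le_max_left N1 N2) hn0N) hn'ge
    have := hN1 n' h1
    rw [Real.dist_eq, sub_zero] at this
    have := abs_lt.mp this
    linarith
  have habs := abs_lt.mp hN2'
  have : u < x m' := by
    have h := htel
    nlinarith [hsum_ge, hrIco]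
  linarith

/-- If partial sums of `θ` diverge, partial sums of `r` converge, and eventually each step
is at least `η * θ n + r n` with `η > 0`, then `x` cannot be bounded above. -/
lemma escape_lemma (x θ r : ℕ → ℝ) (η B : ℝ) (hη : 0 < η)
    (hθdiv : Tendsto (fun N => ∑ k ∈ Finset.range N, θ k) atTop atTop)
    (hrS : ∃ L, Tendsto (fun N => ∑ k ∈ Finset.range N, r k) atTop (nhds L))
    (hub : ∀ n, x n ≤ B)
    (hev : ∀ᶠ n in atTop, η * θ n + r n ≤ x (n + 1) - x n) : False := by
  obtain ⟨L, hL⟩ := hrS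
  obtain ⟨N, hN⟩ := eventually_atTop.mp hev
  set Θ : ℕ → ℝ := fun M => ∑ k ∈ Finset.range M, θ k with hΘ
  set S : ℕ → ℝ := fun M => ∑ k ∈ Finset.range M, r k with hS
  have key : ∀ m, N ≤ m → η * (Θ m - Θ N) + (S m - S N) ≤ x m - x N := by
    intro m hm
    have htel : x m - x N = ∑ k ∈ Finset.Ico N m, (x (k + 1) - x k) := by
      rw [Finset.sum_Ico_eq_sub _ hm, Finset.sum_range_sub, Finset.sum_range_sub]; ring
    have hsum : ∑ k ∈ Finset.Ico N m, (η * θ k + r k)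
        ≤ ∑ k ∈ Finset.Ico N m, (x (k + 1) - x k) := by
      refine Finset.sum_le_sum fun k hk => ?_
      exact hN k (Finset.mem_Ico.mp hk).1
    have heq : ∑ k ∈ Finset.Ico N m, (η * θ k + r k)
        = η * (Θ m - Θ N) + (S m - S N) := by
      rw [Finset.sum_add_distrib, ← Finset.mul_sum, Finset.sum_Ico_eq_sub _ hm,
        Finset.sum_Ico_eq_sub _ hm]
    rw [htel]; rw [heq] at hsum; exact hsum
  have hT : Tendsto (fun m => η * (Θ m - Θ N) + (S m - S N)) atTop atTop := by
    have h1 : Tendsto (fun m => η * (Θ m - Θ N)) atTop atTop := by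
      exact Tendsto.const_mul_atTop hη (tendsto_atTop_add_const_right _ _ hθdiv)
    have h2 : Tendsto (fun m => S m - S N) atTop (nhds (L - S N)) :=
      hL.sub_const _
    have h3 : ∀ᶠ m in atTop, L - S N - 1 ≤ S m - S N :=
      h2.eventually (eventually_ge_nhds (by linarith))
    exact tendsto_atTop_add_right_of_le' atTop (L - S N - 1) h1 h3
  obtain ⟨m, hm1, hm2⟩ := ((hT.eventually_gt_atTop (B - x N)).and (eventually_ge_atTop N)).exists
  have := key m hm2
  have := hub m
  linarith

theorem perturbed_mann_converges
    (f : ℝ → ℝ) (hfc : ContinuousOn f (Set.Icc 0 1))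
    (hfm : Set.MapsTo f (Set.Icc 0 1) (Set.Icc 0 1))
    (θ r x : ℕ → ℝ)
    (hθ : ∀ n, θ n ∈ Set.Icc (0:ℝ) 1)
    (hx : ∀ n, x n ∈ Set.Icc (0:ℝ) 1)
    (hrec : ∀ n, x (n + 1) = (1 - θ n) * x n + θ n * f (x n) + r n)
    (h1 : Tendsto θ atTop (nhds 0))
    (h2 : ¬ Summable θ)
    (h3 : Tendsto (fun n => r n / θ n) atTop (nhds 0))
    (h4 : ∃ L : ℝ, Tendsto (fun N => ∑ n ∈ Finset.range N, r n) atTop (nhds L)) :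
    ∃ p ∈ Set.Icc (0:ℝ) 1, f p = p ∧ Tendsto x atTop (nhds p) := by
  classical
  obtain ⟨L, hL⟩ := h4
  have hScauchy : CauchySeq (fun N => ∑ n ∈ Finset.range N, r n) := hL.cauchySeq
  -- r tends to 0
  have hr0 : Tendsto r atTop (nhds 0) := by
    have hcomp : Tendsto (fun n : ℕ =>
        (∑ k ∈ Finset.range (n + 1), r k) - ∑ k ∈ Finset.range n, r k)
        atTop (nhds (L - L)) :=
      ((hL.comp (tendsto_add_atTop_nat 1)).sub hL)
    rw [sub_self] at hcomp
    have heq : (fun n : ℕ =>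
        (∑ k ∈ Finset.range (n + 1), r k) - ∑ k ∈ Finset.range n, r k) = r := by
      funext n
      rw [Finset.sum_range_succ]
      ring
    rwa [heq] at hcomp
  -- step formula
  have hd_eq : ∀ n, x (n + 1) - x n = θ n * (f (x n) - x n) + r n := by
    intro n
    rw [hrec n]; ring
  -- steps tend to 0
  have hd0 : Tendsto (fun n => x (n + 1) - x n) atTop (nhds 0) := by
    have hnorm : ∀ n, ‖θ n * (f (x n) - x n)‖ ≤ θ n := by
      intro n
      have hx1 := hx n
      have hf1 := hfm hx1
      rw [norm_mul, Real.norm_eq_abs, Real.norm_eq_abs, abs_of_nonneg (hθ n).1]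
      have habs : |f (x n) - x n| ≤ 1 := by
        rw [abs_le]
        constructor <;> [linarith [hf1.1, hx1.2]; linarith [hf1.2, hx1.1]]
      nlinarith [(hθ n).1]
    have hmain : Tendsto (fun n => θ n * (f (x n) - x n)) atTop (nhds 0) :=
      squeeze_zero_norm hnorm h1
    have := hmain.add hr0
    rw [add_zero] at this
    refine this.congr fun n => (hd_eq n).symm
  -- boundedness
  have hbdd_above : IsBoundedUnder (· ≤ ·) atTop x :=
    isBoundedUnder_of ⟨1, fun n => (hx n).2⟩
  have hbdd_below : IsBoundedUnder (· ≥ ·) atTop x :=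
    isBoundedUnder_of ⟨0, fun n => (hx n).1⟩
  set a := liminf x atTop with ha
  set b := limsup x atTop with hb
  have hab : a ≤ b := liminf_le_limsup hbdd_above hbdd_below
  have ha0 : 0 ≤ a :=
    le_liminf_of_le hbdd_above.isCoboundedUnder_ge (Eventually.of_forall fun n => (hx n).1)
  have hb1 : b ≤ 1 :=
    limsup_le_of_le hbdd_below.isCoboundedUnder_le (Eventually.of_forall fun n => (hx n).2)
  -- main convergence : a = b
  have hmain : a = b := by
    by_contra hne
    have hlt : a < b := lt_of_le_of_ne hab hne
    obtain ⟨c1, c2, hac1, hc12, hc2b⟩ : ∃ c1 c2, a < c1 ∧ c1 < c2 ∧ c2 < b :=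
      ⟨a + (b - a) / 4, b - (b - a) / 4, by linarith, by linarith, by linarith⟩
    have hcIcc : Set.Icc c1 c2 ⊆ Set.Icc (0:ℝ) 1 := fun z hz =>
      ⟨by have := hz.1; linarith, by have := hz.2; linarith⟩
    by_cases hcase : ∃ y ∈ Set.Icc c1 c2, y < f y
    · -- f y > y at some point of the band: no downward crossing possible
      obtain ⟨y, hy, hfy⟩ := hcase
      have hy01 : y ∈ Set.Icc (0:ℝ) 1 := hcIcc hy
      have hcont : ContinuousWithinAt (fun z => f z - z) (Set.Icc 0 1) y :=
        (hfc.sub continuousOn_id) y hy01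
      have hev : ∀ᶠ z in nhdsWithin y (Set.Icc 0 1), 0 < f z - z :=
        hcont.eventually (eventually_gt_nhds (by simpa using sub_pos.mpr hfy))
      obtain ⟨δ, hδ0, hδ⟩ := Metric.mem_nhdsWithin_iff.mp hev
      set u := max c1 (y - δ / 2) with hu
      set v := min c2 (y + δ / 2) with hv
      have huv : u < v := by
        have h1 : c1 < v := lt_min (by linarith) (by linarith [hy.1])
        have h2 : y - δ / 2 < v := lt_min (by linarith [hy.2]) (by linarith)
        exact max_lt h1 h2
      have hband : ∀ z ∈ Set.Icc u v, 0 ≤ f z - z := by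
        intro z hz
        have hz01 : z ∈ Set.Icc (0:ℝ) 1 :=
          hcIcc ⟨le_trans (le_max_left _ _) hz.1, le_trans hz.2 (min_le_left _ _)⟩
        have hzy : dist z y < δ := by
          rw [Real.dist_eq, abs_lt]
          constructor
          · have := le_trans (le_max_right c1 (y - δ / 2)) hz.1
            linarith
          · have := le_trans hz.2 (min_le_right c2 (y + δ / 2))
            linarith
        exact le_of_lt (hδ ⟨hzy, hz01⟩)
      have hfa : ∃ᶠ n in atTop, v < x n :=
        frequently_lt_of_lt_limsup hbdd_below.isCoboundedUnder_le
          (lt_of_le_of_lt (min_le_left _ _) hc2b)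
      have hfb : ∃ᶠ n in atTop, x n < u :=
        frequently_lt_of_liminf_lt hbdd_above.isCoboundedUnder_ge
          (lt_of_lt_of_le hac1 (le_max_left _ _))
      refine no_down_crossing x r u v huv hd0 hScauchy ?_ hfb hfa
      intro n hn
      have hb0 := hband (x n) hn
      have hθn := (hθ n).1
      rw [hd_eq n]
      nlinarith
    · -- f y ≤ y on the whole band : no upward crossing possible
      push_neg at hcase
      have hfb' : ∃ᶠ n in atTop, c2 < x n :=
        frequently_lt_of_lt_limsup hbdd_below.isCoboundedUnder_le hc2b
      have hfa' : ∃ᶠ n in atTop, x n < c1 :=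
        frequently_lt_of_liminf_lt hbdd_above.isCoboundedUnder_ge hac1
      have hd0' : Tendsto (fun n => (-x (n + 1)) - (-x n)) atTop (nhds 0) := by
        have h := hd0.neg
        rw [neg_zero] at h
        refine h.congr fun n => by ring
      have hScauchy' : CauchySeq (fun N => ∑ k ∈ Finset.range N, (-r k)) := by
        have heq : (fun N => ∑ k ∈ Finset.range N, (-r k))
            = fun N => -(∑ k ∈ Finset.range N, r k) := by
          funext N; simp
        rw [heq]
        exact (hL.neg).cauchySeq
      refine no_down_crossing (fun n => -x n) (fun n => -r n) (-c2) (-c1)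
        (by linarith) hd0' hScauchy' ?_ ?_ ?_
      · intro n hn
        simp only [Set.mem_Icc] at hn
        have hn1 : c1 ≤ x n := by linarith [hn.2]
        have hn2 : x n ≤ c2 := by linarith [hn.1]
        have hfle : f (x n) ≤ x n := hcase (x n) ⟨hn1, hn2⟩
        have hθn := (hθ n).1
        have hd := hd_eq n
        show -r n ≤ -x (n + 1) - -x n
        nlinarith [mul_nonneg hθn (sub_nonneg.2 hfle)]
      · exact hfb'.mono fun n h => by simpa using h
      · exact hfa'.mono fun n h => by simpa using h
  -- convergence
  have hconv : Tendsto x atTop (nhds a) :=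
    tendsto_of_liminf_eq_limsup rfl hmain.symm hbdd_above hbdd_below
  have hp01 : a ∈ Set.Icc (0:ℝ) 1 := ⟨ha0, by rw [hmain]; exact hb1⟩
  refine ⟨a, hp01, ?_, hconv⟩
  -- fixed point
  by_contra hne
  have hxin : Tendsto x atTop (nhdsWithin a (Set.Icc 0 1)) :=
    tendsto_nhdsWithin_of_tendsto_nhds_of_eventually_within x hconv
      (Eventually.of_forall hx)
  have hfx : Tendsto (fun n => f (x n)) atTop (nhds (f a)) :=
    ((hfc a hp01).tendsto).comp hxin
  have hgx : Tendsto (fun n => f (x n) - x n) atTop (nhds (f a - a)) := hfx.sub hconv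
  have hθdiv : Tendsto (fun N => ∑ k ∈ Finset.range N, θ k) atTop atTop := by
    by_contra h
    exact h2 ((summable_iff_not_tendsto_nat_atTop_of_nonneg fun n => (hθ n).1).mpr h)
  rcases lt_or_gt_of_ne (sub_ne_zero.mpr hne) with hneg | hpos
  · -- f a < a : -x escapes upward
    set η := (a - f a) / 2 with hη
    have hη0 : 0 < η := by rw [hη]; linarith
    have hevg : ∀ᶠ n in atTop, f (x n) - x n ≤ -η :=
      hgx.eventually (eventually_le_nhds (by rw [hη]; linarith))
    refine escape_lemma (fun n => -x n) θ (fun n => -r n) η 0 hη0 hθdiv ?_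
      (fun n => by simpa using (hx n).1) ?_
    · refine ⟨-L, ?_⟩
      have heq : (fun N => ∑ k ∈ Finset.range N, (-r k))
          = fun N => -(∑ k ∈ Finset.range N, r k) := by funext N; simp
      rw [heq]
      exact hL.neg
    · refine hevg.mono fun n h => ?_
      have hθn := (hθ n).1
      have hd := hd_eq n
      show η * θ n + -r n ≤ -x (n + 1) - -x n
      nlinarith [mul_le_mul_of_nonneg_left h hθn]
  · -- f a > a : x escapes upward
    set η := (f a - a) / 2 with hη
    have hη0 : 0 < η := by rw [hη]; linarith
    have hevg : ∀ᶠ n in atTop, η ≤ f (x n) - x n :=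
      hgx.eventually (eventually_ge_nhds (by rw [hη]; linarith))
    refine escape_lemma x θ r η 1 hη0 hθdiv ⟨L, hL⟩ (fun n => (hx n).2) ?_
    refine hevg.mono fun n h => ?_
    have hθn := (hθ n).1
    have hd := hd_eq n
    show η * θ n + r n ≤ x (n + 1) - x n
    nlinarith [mul_le_mul_of_nonneg_left h hθn]
end

section
/- Let f : [0,1] → [0,1] be continuous. Then for any initial data x₀ ∈ [0,1], the sequence defined by x_{n+1} = (n/(n+1)) xₙ + (1/(n+1)) f(xₙ) converges to a fixed point of f. -/
open Filter Set Topology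

/-- Crossing lemma: if a sequence is frequently below `p` and frequently above `p`,
then for every `N` there is `n ≥ N` with `x n ≤ p < x (n+1)`. -/
lemma mann_cross (x : ℕ → ℝ) (p : ℝ) (h1 : ∃ᶠ n in atTop, x n < p)
    (h2 : ∃ᶠ n in atTop, p < x n) (N : ℕ) :
    ∃ n, N ≤ n ∧ x n ≤ p ∧ p < x (n + 1) := by
  classical
  obtain ⟨n, hn, hnN⟩ := (h1.and_eventually (eventually_ge_atTop N)).exists
  have hex : ∃ j, p < x (n + j) := by
    obtain ⟨m, hm, hmn⟩ := (h2.and_eventually (eventually_ge_atTop n)).exists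
    exact ⟨m - n, by rwa [Nat.add_sub_cancel' hmn]⟩
  have hj : p < x (n + Nat.find hex) := Nat.find_spec hex
  have hj0 : Nat.find hex ≠ 0 := by
    intro h
    rw [h, Nat.add_zero] at hj
    exact absurd hj (not_lt.2 hn.le)
  refine ⟨n + (Nat.find hex - 1), le_trans hnN (Nat.le_add_right _ _), ?_, ?_⟩
  · have := Nat.find_min hex (Nat.sub_lt (Nat.pos_of_ne_zero hj0) one_pos)
    exact not_lt.1 this
  · have heq : n + (Nat.find hex - 1) + 1 = n + Nat.find hex := by omega
    rw [heq]; exact hj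

theorem mann_converges_general
    (f : ℝ → ℝ) (hfc : ContinuousOn f (Set.Icc 0 1))
    (hfm : Set.MapsTo f (Set.Icc 0 1) (Set.Icc 0 1))
    (x : ℕ → ℝ) (hx0 : x 0 ∈ Set.Icc (0:ℝ) 1)
    (hrec : ∀ n : ℕ, x (n + 1) = ((n : ℝ) / (n + 1)) * x n + (1 / (n + 1)) * f (x n)) :
    ∃ p ∈ Set.Icc (0:ℝ) 1, f p = p ∧ Tendsto x atTop (nhds p) := by
  -- rewrite the recursion
  have hkey : ∀ n : ℕ, x (n + 1) = x n + (f (x n) - x n) / ((n : ℝ) + 1) := by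
    intro n
    have h : ((n : ℝ) + 1) ≠ 0 := by positivity
    rw [hrec n]
    field_simp
    ring
  -- the sequence stays in [0,1]
  have hmem : ∀ n, x n ∈ Set.Icc (0:ℝ) 1 := by
    intro n
    induction n with
    | zero => exact hx0
    | succ n ih =>
      have hfn := hfm ih
      have ht : (0:ℝ) < ((n : ℝ) + 1)⁻¹ := by positivity
      have ht1 : ((n : ℝ) + 1)⁻¹ ≤ 1 := by
        rw [inv_le_one_iff₀]
        right
        linarith [Nat.cast_nonneg (α := ℝ) n]
      have hk := hkey n
      rw [div_eq_mul_inv] at hk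
      constructor
      · rw [hk]; nlinarith [ih.1, ih.2, hfn.1, hfn.2]
      · rw [hk]; nlinarith [ih.1, ih.2, hfn.1, hfn.2]
  -- step bounds
  have hstep_up : ∀ n : ℕ, x (n + 1) ≤ x n + 1 / ((n : ℝ) + 1) := by
    intro n
    have ht : (0:ℝ) < ((n : ℝ) + 1) := by positivity
    have h1 : f (x n) - x n ≤ 1 := by
      have := (hfm (hmem n)).2; have := (hmem n).1; linarith
    rw [hkey n]
    gcongr
  have hstep_down : ∀ n : ℕ, x n - 1 / ((n : ℝ) + 1) ≤ x (n + 1) := by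
    intro n
    have ht : (0:ℝ) < ((n : ℝ) + 1) := by positivity
    have h1 : -1 ≤ f (x n) - x n := by
      have := (hfm (hmem n)).1; have := (hmem n).2; linarith
    rw [hkey n]
    have : -(1 / ((n : ℝ) + 1)) ≤ (f (x n) - x n) / ((n : ℝ) + 1) := by
      rw [neg_div']
      gcongr
    linarith
  -- boundedness facts
  have hb1 : IsBoundedUnder (· ≤ ·) atTop x := isBoundedUnder_of ⟨1, fun n => (hmem n).2⟩
  have hb2 : IsBoundedUnder (· ≥ ·) atTop x := isBoundedUnder_of ⟨0, fun n => (hmem n).1⟩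
  have hcob_ge : IsCoboundedUnder (· ≥ ·) atTop x := hb1.isCobounded_ge
  have hcob_le : IsCoboundedUnder (· ≤ ·) atTop x := hb2.isCobounded_le
  set l := liminf x atTop with hldef
  set L := limsup x atTop with hLdef
  have hlL : l ≤ L := liminf_le_limsup hb1 hb2
  have hL1 : L ≤ 1 := limsup_le_of_le hcob_le (Eventually.of_forall fun n => (hmem n).2)
  have h0l : (0:ℝ) ≤ l := le_liminf_of_le hcob_ge (Eventually.of_forall fun n => (hmem n).1)
  -- every point strictly between l and L is a fixed point of f
  have hfix : ∀ p : ℝ, l < p → p < L → f p = p := by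
    intro p hp1 hp2
    have hp01 : p ∈ Set.Icc (0:ℝ) 1 := ⟨le_trans h0l hp1.le, le_trans hp2.le hL1⟩
    have hflt : ∃ᶠ n in atTop, x n < p := frequently_lt_of_liminf_lt hcob_ge hp1
    have hfgt : ∃ᶠ n in atTop, p < x n := frequently_lt_of_lt_limsup hcob_le hp2
    have htendinv : Tendsto (fun N : ℕ => 1 / ((N : ℝ) + 1)) atTop (𝓝 0) :=
      tendsto_one_div_add_atTop_nhds_zero_nat
    have hcont : ContinuousWithinAt f (Set.Icc 0 1) p := hfc p hp01
    -- upward crossings give f p ≥ p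
    have hge : p ≤ f p := by
      have hup := fun N => mann_cross x p hflt hfgt N
      choose u hu1 hu2 hu3 using hup
      have hxu : Tendsto (fun N => x (u N)) atTop (𝓝 p) := by
        apply tendsto_of_tendsto_of_tendsto_of_le_of_le'
          (g := fun N : ℕ => p - 1 / ((N : ℝ) + 1)) (h := fun _ : ℕ => p)
        · simpa using tendsto_const_nhds.sub htendinv
        · exact tendsto_const_nhds
        · refine Eventually.of_forall fun N => ?_
          have h1 : 1 / ((u N : ℝ) + 1) ≤ 1 / ((N : ℝ) + 1) := by
            gcongr
            exact_mod_cast hu1 N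
          have h2 := hstep_up (u N)
          have h3 := hu3 N
          linarith
        · exact Eventually.of_forall fun N => hu2 N
      have hct : Tendsto (fun N => f (x (u N))) atTop (𝓝 (f p)) :=
        hcont.tendsto.comp (tendsto_nhdsWithin_iff.2
          ⟨hxu, Eventually.of_forall fun N => hmem (u N)⟩)
      refine le_of_tendsto_of_tendsto' hxu hct fun N => ?_
      by_contra hcon
      push_neg at hcon
      have ht : (0:ℝ) < ((u N : ℝ) + 1) := by positivity
      have : (f (x (u N)) - x (u N)) / ((u N : ℝ) + 1) < 0 :=
        div_neg_of_neg_of_pos (by linarith) ht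
      have hk := hkey (u N)
      have := hu2 N
      have := hu3 N
      linarith
    -- downward crossings give f p ≤ p
    have hle : f p ≤ p := by
      have hflt' : ∃ᶠ n in atTop, (fun n => -x n) n < -p := hfgt.mono fun n h => by simpa using h
      have hfgt' : ∃ᶠ n in atTop, -p < (fun n => -x n) n := hflt.mono fun n h => by simpa using h
      have hdown := fun N => mann_cross (fun n => -x n) (-p) hflt' hfgt' N
      choose u hu1 hu2 hu3 using hdown
      simp only [neg_le_neg_iff, neg_lt_neg_iff] at hu2 hu3
      -- hu2 : p ≤ x (u N), hu3 : x (u N + 1) < p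
      have hxu : Tendsto (fun N => x (u N)) atTop (𝓝 p) := by
        apply tendsto_of_tendsto_of_tendsto_of_le_of_le'
          (g := fun _ : ℕ => p) (h := fun N : ℕ => p + 1 / ((N : ℝ) + 1))
        · exact tendsto_const_nhds
        · simpa using tendsto_const_nhds.add htendinv
        · exact Eventually.of_forall fun N => hu2 N
        · refine Eventually.of_forall fun N => ?_
          have h1 : 1 / ((u N : ℝ) + 1) ≤ 1 / ((N : ℝ) + 1) := by
            gcongr
            exact_mod_cast hu1 N
          have h2 := hstep_down (u N)
          have h3 := hu3 N
          linarith
      have hct : Tendsto (fun N => f (x (u N))) atTop (𝓝 (f p)) :=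
        hcont.tendsto.comp (tendsto_nhdsWithin_iff.2
          ⟨hxu, Eventually.of_forall fun N => hmem (u N)⟩)
      refine le_of_tendsto_of_tendsto' hct hxu fun N => ?_
      by_contra hcon
      push_neg at hcon
      have ht : (0:ℝ) < ((u N : ℝ) + 1) := by positivity
      have : 0 < (f (x (u N)) - x (u N)) / ((u N : ℝ) + 1) :=
        div_pos (by linarith) ht
      have hk := hkey (u N)
      have := hu2 N
      have := hu3 N
      linarith
    linarith
  -- the liminf and limsup coincide
  have hconv : l = L := by
    by_contra hne
    have hlt : l < L := lt_of_le_of_ne hlL hne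
    obtain ⟨a, hla, haL⟩ := exists_between hlt
    obtain ⟨b, hab, hbL⟩ := exists_between haL
    have hsmall : ∀ᶠ n : ℕ in atTop, 1 / ((n : ℝ) + 1) < b - a :=
      tendsto_one_div_add_atTop_nhds_zero_nat.eventually_lt_const (by linarith)
    obtain ⟨N, hN⟩ := eventually_atTop.1 hsmall
    have hflt : ∃ᶠ n in atTop, x n < a := frequently_lt_of_liminf_lt hcob_ge hla
    have hfgt : ∃ᶠ n in atTop, a < x n :=
      frequently_lt_of_lt_limsup hcob_le (lt_trans hab hbL)
    obtain ⟨n, hnN, hna, hna'⟩ := mann_cross x a hflt hfgt N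
    have hxb : x (n + 1) < b := by
      have h1 := hstep_up n
      have h2 := hN n hnN
      linarith
    have hin1 : l < x (n + 1) := lt_trans hla hna'
    have hin2 : x (n + 1) < L := lt_trans hxb hbL
    have hconst : ∀ m, x (n + 1 + m) = x (n + 1) := by
      intro m
      induction m with
      | zero => rfl
      | succ m ih =>
        have hf : f (x (n + 1 + m)) = x (n + 1 + m) := by
          rw [ih]; exact hfix _ hin1 hin2
        have heq : n + 1 + (m + 1) = (n + 1 + m) + 1 := by omega
        rw [heq, hkey (n + 1 + m), hf, sub_self, zero_div, add_zero, ih]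
    have hfb : ∃ᶠ m in atTop, b < x m := frequently_lt_of_lt_limsup hcob_le hbL
    obtain ⟨m, hbm, hm2⟩ := (hfb.and_eventually (eventually_ge_atTop (n + 1))).exists
    have hxm : x m = x (n + 1) := by
      have := hconst (m - (n + 1))
      rwa [Nat.add_sub_cancel' hm2] at this
    linarith
  -- hence x converges to L
  have hx : Tendsto x atTop (𝓝 L) := tendsto_of_liminf_eq_limsup hconv rfl hb1 hb2
  have hL01 : L ∈ Set.Icc (0:ℝ) 1 := ⟨hconv ▸ h0l, hL1⟩
  -- Cesàro identity: n * x n = ∑_{i<n} f (x i)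
  have hsum : ∀ n : ℕ, (n : ℝ) * x n = ∑ i ∈ Finset.range n, f (x i) := by
    intro n
    induction n with
    | zero => simp
    | succ n ih =>
      rw [Finset.sum_range_succ, ← ih]
      have h : ((n : ℝ) + 1) ≠ 0 := by positivity
      push_cast
      rw [hrec n]
      field_simp
  -- f L = L via Cesàro means
  have hfx : Tendsto (fun n => f (x n)) atTop (𝓝 (f L)) :=
    (hfc L hL01).tendsto.comp (tendsto_nhdsWithin_iff.2
      ⟨hx, Eventually.of_forall hmem⟩)
  have hces : Tendsto (fun n : ℕ => (n : ℝ)⁻¹ * ∑ i ∈ Finset.range n, f (x i))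
      atTop (𝓝 (f L)) := hfx.cesaro
  have heq : (fun n : ℕ => (n : ℝ)⁻¹ * ∑ i ∈ Finset.range n, f (x i)) =ᶠ[atTop] x := by
    filter_upwards [eventually_ge_atTop 1] with n hn
    have hpos : (0:ℝ) < (n : ℝ) := by exact_mod_cast hn
    rw [← hsum n, ← mul_assoc, inv_mul_cancel₀ hpos.ne', one_mul]
  have hfL : f L = L := tendsto_nhds_unique (hces.congr' heq) hx
  exact ⟨L, hL01, hfL, hx⟩
end

section
/- Let f : [0,1] → [0,1] be continuous with a unique fixed point p ∈ [0,1]. Then for any x₀ ∈ [0,1], the sequence defined by x_{n+1} = (n/(n+1)) xₙ + (1/(n+1)) f(xₙ) converges to p. -/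
open Filter Set Topology

private lemma mann_ico_harmonic_tendsto (N : ℕ) :
    Tendsto (fun n => ∑ k ∈ Finset.Ico N n, (1 / (k + 1) : ℝ)) atTop atTop := by
  have h2 : Tendsto (fun n => (∑ i ∈ Finset.range n, (1 / (i + 1) : ℝ))
      - ∑ i ∈ Finset.range N, (1 / (i + 1) : ℝ)) atTop atTop :=
    tendsto_atTop_add_const_right _ _ Real.tendsto_sum_range_one_div_nat_succ_atTop
  apply h2.congr'
  filter_upwards [eventually_ge_atTop N] with n hn
  rw [Finset.sum_Ico_eq_sub _ hn]

private lemma mann_no_drift (y : ℕ → ℝ) (B c : ℝ) (hc : c < 0) (N : ℕ)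
    (hstep : ∀ n, N ≤ n → y (n + 1) ≤ y n + c / (n + 1))
    (hB : ∀ n, B ≤ y n) : False := by
  have key : ∀ n, N ≤ n → y n ≤ y N + c * ∑ k ∈ Finset.Ico N n, (1 / (k + 1) : ℝ) := by
    intro n hn
    induction n with
    | zero =>
      interval_cases N
      simp
    | succ m ih =>
      rcases Nat.lt_or_ge N (m + 1) with h | h
      · have hNm : N ≤ m := Nat.lt_succ_iff.mp h
        have h1 := ih hNm
        have h2 := hstep m hNm
        rw [Finset.sum_Ico_succ_top hNm]
        have : c * (∑ k ∈ Finset.Ico N m, (1 / (k + 1) : ℝ) + 1 / (m + 1))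
            = c * ∑ k ∈ Finset.Ico N m, (1 / (k + 1) : ℝ) + c / (m + 1) := by ring
        linarith [this]
      · have hNe : N = m + 1 := le_antisymm hn h
        simp [hNe]
  have htend : Tendsto (fun n => y N + c * ∑ k ∈ Finset.Ico N n, (1 / (k + 1) : ℝ))
      atTop atBot := by
    apply tendsto_atBot_add_const_left
    exact (tendsto_const_mul_atBot_of_neg hc).mpr (mann_ico_harmonic_tendsto N)
  obtain ⟨n, hn1, hn2⟩ :=
    ((htend.eventually (eventually_lt_atBot B)).and (eventually_ge_atTop N)).exists
  exact absurd (hB n) (not_le.mpr (lt_of_le_of_lt (key n hn2) hn1))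

theorem mann_converges_unique_fixed_point
    (f : ℝ → ℝ) (hfc : ContinuousOn f (Set.Icc 0 1))
    (hfm : Set.MapsTo f (Set.Icc 0 1) (Set.Icc 0 1))
    (p : ℝ) (hp : p ∈ Set.Icc (0:ℝ) 1) (hfp : f p = p)
    (huniq : ∀ q ∈ Set.Icc (0:ℝ) 1, f q = q → q = p)
    (x : ℕ → ℝ) (hx0 : x 0 ∈ Set.Icc (0:ℝ) 1)
    (hrec : ∀ n : ℕ, x (n + 1) = ((n : ℝ) / (n + 1)) * x n + (1 / (n + 1)) * f (x n)) :
    Tendsto x atTop (nhds p) := by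
  have h01 : (0:ℝ) ∈ Set.Icc (0:ℝ) 1 := by norm_num
  have h11 : (1:ℝ) ∈ Set.Icc (0:ℝ) 1 := by norm_num
  have hf0 := hfm h01
  have hf1 := hfm h11
  -- membership
  have hmem : ∀ n, x n ∈ Set.Icc (0:ℝ) 1 := by
    intro n
    induction n with
    | zero => exact hx0
    | succ m ih =>
      have hb := hfm ih
      obtain ⟨ha0, ha1⟩ := ih
      obtain ⟨hb0, hb1⟩ := hb
      have hpos : (0:ℝ) < (m:ℝ) + 1 := by positivity
      rw [hrec m]
      constructor
      · have h1 : (0:ℝ) ≤ (m:ℝ) / (m + 1) := by positivity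
        have h2 : (0:ℝ) ≤ (1:ℝ) / (m + 1) := by positivity
        nlinarith
      · have hkey : ((m:ℝ) / (m + 1)) * x m + (1 / (m + 1)) * f (x m)
            ≤ ((m:ℝ) / (m + 1)) * 1 + (1 / (m + 1)) * 1 := by
          have h1 : (0:ℝ) ≤ (m:ℝ) / (m + 1) := by positivity
          have h2 : (0:ℝ) ≤ (1:ℝ) / (m + 1) := by positivity
          nlinarith
        have : ((m:ℝ) / (m + 1)) * 1 + (1 / (m + 1)) * 1 = 1 := by
          field_simp
        linarith
  -- step formula
  have hstep : ∀ n : ℕ, x (n + 1) - x n = (f (x n) - x n) / (n + 1) := by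
    intro n
    have hne : ((n:ℝ) + 1) ≠ 0 := by positivity
    rw [hrec n]
    field_simp
    ring
  -- sign lemmas
  have hsign_lt : ∀ y ∈ Set.Icc (0:ℝ) 1, y < p → y < f y := by
    intro y hy hyp
    by_contra h
    push_neg at h
    have hne : f y ≠ y := fun he => absurd (huniq y hy he) (ne_of_lt hyp)
    have hlt : f y < y := lt_of_le_of_ne h hne
    have hsub : Set.Icc (0:ℝ) y ⊆ Set.Icc (0:ℝ) 1 := Set.Icc_subset_Icc le_rfl hy.2
    have hcg : ContinuousOn (fun t => f t - t) (Set.Icc 0 y) :=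
      (hfc.mono hsub).sub continuousOn_id
    have hmemv : (0:ℝ) ∈ Set.Icc ((fun t => f t - t) y) ((fun t => f t - t) 0) :=
      ⟨by simpa using hlt.le, by simpa using hf0.1⟩
    obtain ⟨z, hz, hz0⟩ := intermediate_value_Icc' hy.1 hcg hmemv
    have hz1 : z ∈ Set.Icc (0:ℝ) 1 := ⟨hz.1, hz.2.trans hy.2⟩
    have hzp : z = p := huniq z hz1 (by simpa [sub_eq_zero] using hz0)
    have : z ≤ y := hz.2
    rw [hzp] at this
    linarith
  have hsign_gt : ∀ y ∈ Set.Icc (0:ℝ) 1, p < y → f y < y := by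
    intro y hy hyp
    by_contra h
    push_neg at h
    have hne : f y ≠ y := fun he => absurd (huniq y hy he) (ne_of_gt hyp)
    have hgt : y < f y := lt_of_le_of_ne h (Ne.symm hne)
    have hsub : Set.Icc y (1:ℝ) ⊆ Set.Icc (0:ℝ) 1 := Set.Icc_subset_Icc hy.1 le_rfl
    have hcg : ContinuousOn (fun t => f t - t) (Set.Icc y 1) :=
      (hfc.mono hsub).sub continuousOn_id
    have hmemv : (0:ℝ) ∈ Set.Icc ((fun t => f t - t) 1) ((fun t => f t - t) y) :=
      ⟨by simpa using hf1.2, by simpa using hgt.le⟩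
    obtain ⟨z, hz, hz0⟩ := intermediate_value_Icc' hy.2 hcg hmemv
    have hz1 : z ∈ Set.Icc (0:ℝ) 1 := ⟨hy.1.trans hz.1, hz.2⟩
    have hzp : z = p := huniq z hz1 (by simpa [sub_eq_zero] using hz0)
    have : y ≤ z := hz.1
    rw [hzp] at this
    linarith
  -- main convergence
  rw [Metric.tendsto_atTop]
  intro ε hε
  obtain ⟨N₀, hN₀⟩ : ∃ N₀ : ℕ, (1:ℝ) / (N₀ + 1) < ε := exists_nat_one_div_lt hε
  have hdivle : ∀ n : ℕ, N₀ ≤ n → (1:ℝ) / (n + 1) ≤ 1 / (N₀ + 1) := by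
    intro n hn
    gcongr <;> exact_mod_cast hn
  -- once close, stays close
  have hstay : ∀ n, N₀ ≤ n → dist (x n) p < ε → dist (x (n + 1)) p < ε := by
    intro n hn hd
    rw [Real.dist_eq, abs_lt] at hd ⊢
    have hs := hstep n
    have hpos : (0:ℝ) < (n:ℝ) + 1 := by positivity
    have hdle := hdivle n hn
    obtain ⟨ha0, ha1⟩ := hmem n
    obtain ⟨hb0, hb1⟩ := hfm (hmem n)
    rcases le_total p (x n) with hc | hc
    · have hfle : f (x n) ≤ x n := by
        rcases eq_or_lt_of_le hc with he | hlt
        · rw [← he, hfp]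
        · exact le_of_lt (hsign_gt _ (hmem n) hlt)
      have h1 : x (n + 1) - x n ≤ 0 := by
        rw [hs]
        apply div_nonpos_of_nonpos_of_nonneg <;> linarith
      have h2 : -(1 / ((n:ℝ) + 1)) ≤ x (n + 1) - x n := by
        rw [hs, neg_div']
        gcongr <;> linarith
      constructor <;> linarith
    · have hfge : x n ≤ f (x n) := by
        rcases eq_or_lt_of_le hc with he | hlt
        · rw [he, hfp]
        · exact le_of_lt (hsign_lt _ (hmem n) hlt)
      have h1 : 0 ≤ x (n + 1) - x n := by
        rw [hs]
        apply div_nonneg <;> linarith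
      have h2 : x (n + 1) - x n ≤ 1 / ((n:ℝ) + 1) := by
        rw [hs]
        gcongr <;> linarith
      constructor <;> linarith
  -- must visit an ε-neighborhood
  have hvisit : ∃ n, N₀ ≤ n ∧ dist (x n) p < ε := by
    by_contra hno
    push_neg at hno
    simp only [Real.dist_eq, not_lt] at hno
    rcases le_total (x N₀) p with h0 | h0
    · -- stuck below p - ε forever
      have hall : ∀ n, N₀ ≤ n → x n ≤ p - ε := by
        intro n hn
        induction n with
        | zero =>
          have hN0 : N₀ = 0 := Nat.le_zero.mp hn
          have habs := hno 0 (by omega)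
          rw [hN0] at h0
          rcases abs_cases (x 0 - p) with ⟨he, _⟩ | ⟨he, _⟩ <;>
            rw [he] at habs <;> linarith
        | succ m ih =>
          rcases Nat.lt_or_ge N₀ (m + 1) with h | h
          · have hNm : N₀ ≤ m := Nat.lt_succ_iff.mp h
            have hm := ih hNm
            have hs := hstep m
            have hpos : (0:ℝ) < (m:ℝ) + 1 := by positivity
            obtain ⟨ha0, ha1⟩ := hmem m
            obtain ⟨hb0, hb1⟩ := hfm (hmem m)
            have h2 : x (m + 1) - x m ≤ 1 / ((m:ℝ) + 1) := by
              rw [hs]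
              gcongr <;> linarith
            have hdle := hdivle m hNm
            have hlt : x (m + 1) < p := by linarith
            have := hno (m + 1) (by omega)
            rcases abs_cases (x (m + 1) - p) with ⟨he, _⟩ | ⟨he, _⟩ <;>
              rw [he] at this <;> linarith
          · have hNe : N₀ = m + 1 := le_antisymm hn h
            have := hno N₀ le_rfl
            rcases abs_cases (x N₀ - p) with ⟨he, _⟩ | ⟨he, _⟩ <;>
              rw [he] at this <;> rw [← hNe] <;> linarith
      -- min of f t - t on [0, p - ε] is positive
      have hx0K : x N₀ ∈ Set.Icc (0:ℝ) (p - ε) := ⟨(hmem N₀).1, hall N₀ le_rfl⟩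
      have hKsub : Set.Icc (0:ℝ) (p - ε) ⊆ Set.Icc (0:ℝ) 1 :=
        Set.Icc_subset_Icc le_rfl (by linarith [hp.2])
      obtain ⟨m, hmK, hmin⟩ := isCompact_Icc.exists_isMinOn ⟨x N₀, hx0K⟩
        ((hfc.mono hKsub).sub continuousOn_id)
      have hcpos : 0 < f m - m :=
        sub_pos.mpr (hsign_lt m (hKsub hmK) (lt_of_le_of_lt hmK.2 (by linarith)))
      apply mann_no_drift (fun n => -x n) (-1) (-(f m - m)) (by linarith) N₀
      · intro n hn
        have hxK : x n ∈ Set.Icc (0:ℝ) (p - ε) := ⟨(hmem n).1, hall n hn⟩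
        have hge : f m - m ≤ f (x n) - x n := isMinOn_iff.mp hmin (x n) hxK
        have hpos : (0:ℝ) < (n:ℝ) + 1 := by positivity
        have hdiv : (f m - m) / ((n:ℝ) + 1) ≤ (f (x n) - x n) / ((n:ℝ) + 1) := by
          gcongr
        have hs := hstep n
        have : -(f m - m) / ((n:ℝ) + 1) = -((f m - m) / ((n:ℝ) + 1)) := by ring
        simp only [this]
        linarith
      · intro n
        simpa using (hmem n).2
    · -- stuck above p + ε forever
      have hall : ∀ n, N₀ ≤ n → p + ε ≤ x n := by
        intro n hn
        induction n with
        | zero =>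
          have hN0 : N₀ = 0 := Nat.le_zero.mp hn
          have := hno 0 (by omega)
          rw [hN0] at h0
          rcases abs_cases (x 0 - p) with ⟨he, _⟩ | ⟨he, _⟩ <;>
            rw [he] at this <;> linarith
        | succ m ih =>
          rcases Nat.lt_or_ge N₀ (m + 1) with h | h
          · have hNm : N₀ ≤ m := Nat.lt_succ_iff.mp h
            have hm := ih hNm
            have hs := hstep m
            have hpos : (0:ℝ) < (m:ℝ) + 1 := by positivity
            obtain ⟨ha0, ha1⟩ := hmem m
            obtain ⟨hb0, hb1⟩ := hfm (hmem m)
            have h2 : -(1 / ((m:ℝ) + 1)) ≤ x (m + 1) - x m := by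
              rw [hs, neg_div']
              gcongr <;> linarith
            have hdle := hdivle m hNm
            have hlt : p < x (m + 1) := by linarith
            have := hno (m + 1) (by omega)
            rcases abs_cases (x (m + 1) - p) with ⟨he, _⟩ | ⟨he, _⟩ <;>
              rw [he] at this <;> linarith
          · have hNe : N₀ = m + 1 := le_antisymm hn h
            have := hno N₀ le_rfl
            rcases abs_cases (x N₀ - p) with ⟨he, _⟩ | ⟨he, _⟩ <;>
              rw [he] at this <;> rw [← hNe] <;> linarith
      -- max of f t - t on [p + ε, 1] is negative
      have hx0K : x N₀ ∈ Set.Icc (p + ε) 1 := ⟨hall N₀ le_rfl, (hmem N₀).2⟩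
      have hKsub : Set.Icc (p + ε) (1:ℝ) ⊆ Set.Icc (0:ℝ) 1 :=
        Set.Icc_subset_Icc (by linarith [hp.1]) le_rfl
      obtain ⟨m, hmK, hmax⟩ := isCompact_Icc.exists_isMaxOn ⟨x N₀, hx0K⟩
        ((hfc.mono hKsub).sub continuousOn_id)
      have hcneg : f m - m < 0 :=
        sub_neg.mpr (hsign_gt m (hKsub hmK) (lt_of_lt_of_le (by linarith) hmK.1))
      apply mann_no_drift x 0 (f m - m) hcneg N₀
      · intro n hn
        have hxK : x n ∈ Set.Icc (p + ε) 1 := ⟨hall n hn, (hmem n).2⟩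
        have hle : f (x n) - x n ≤ f m - m := isMaxOn_iff.mp hmax (x n) hxK
        have hpos : (0:ℝ) < (n:ℝ) + 1 := by positivity
        have hdiv : (f (x n) - x n) / ((n:ℝ) + 1) ≤ (f m - m) / ((n:ℝ) + 1) := by
          gcongr
        have hs := hstep n
        linarith
      · intro n
        exact (hmem n).1
  obtain ⟨N, hN, hNd⟩ := hvisit
  refine ⟨N, ?_⟩
  intro n hn
  induction n, hn using Nat.le_induction with
  | base => exact hNd
  | succ m hm ih => exact hstay m (hN.trans hm) ih
end

section
/- Let f : [0,1] → [0,1] and θ : [0,∞) → [0,∞) be continuous, and let x : [0,∞) → [0,1] be continuously differentiable satisfying x'(t) + θ(t)x(t) = θ(t) f(x(t)) + r(t) for t ≥ 0, where r : [0,∞) → ℝ is continuous. If (1) r(t)/θ(t) → 0 as t → ∞, (2) ∫₀^∞ θ(t) dt diverges, and (3) ∫₀^∞ r(t) dt converges, then x(t) converges as t → ∞ to a fixed point of f. -/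
open Filter Set Topology

lemma crossing_lemma (x : ℝ → ℝ) (hxc : ContinuousOn x (Set.Ici 0))
    (α β : ℝ) (hαβ : α < β)
    (hlo : ∀ T : ℝ, ∃ t, T ≤ t ∧ 0 ≤ t ∧ x t < α)
    (hhi : ∀ T : ℝ, ∃ t, T ≤ t ∧ 0 ≤ t ∧ β < x t)
    (T : ℝ) :
    ∃ t₁ t₂, T ≤ t₁ ∧ 0 ≤ t₁ ∧ t₁ ≤ t₂ ∧ x t₁ = β ∧ x t₂ = α ∧
      ∀ t ∈ Set.Icc t₁ t₂, x t ∈ Set.Icc α β := by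
  obtain ⟨s, hsT, hs0, hsβ⟩ := hhi T
  obtain ⟨u, hus, hu0, huα⟩ := hlo s
  have hcont : ContinuousOn x (Set.Icc s u) :=
    hxc.mono (fun t ht => le_trans hs0 ht.1)
  -- first hitting time of α in [s,u]
  set S₂ : Set ℝ := Set.Icc s u ∩ x ⁻¹' {α} with hS₂def
  have hS₂ne : S₂.Nonempty := by
    have : α ∈ Set.Icc (x u) (x s) := ⟨le_of_lt huα, le_of_lt (hαβ.trans hsβ)⟩
    obtain ⟨t, ht, hxt⟩ := intermediate_value_Icc' hus hcont this
    exact ⟨t, ht, hxt⟩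
  have hS₂cl : IsClosed S₂ := hcont.preimage_isClosed_of_isClosed isClosed_Icc isClosed_singleton
  have hS₂bdd : BddBelow S₂ := ⟨s, fun t ht => ht.1.1⟩
  set t₂ := sInf S₂ with ht₂def
  have ht₂mem : t₂ ∈ S₂ := hS₂cl.csInf_mem hS₂ne hS₂bdd
  have ht₂s : s ≤ t₂ := ht₂mem.1.1
  have ht₂u : t₂ ≤ u := ht₂mem.1.2
  have hxt₂ : x t₂ = α := ht₂mem.2
  have hmin : ∀ t, s ≤ t → t < t₂ → α < x t := by
    intro t hst htt₂
    by_contra h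
    push_neg at h
    rcases eq_or_lt_of_le h with heq | hlt
    · exact absurd (csInf_le hS₂bdd ⟨⟨hst, le_trans (le_of_lt htt₂) ht₂u⟩, heq⟩)
        (not_le.mpr htt₂)
    · have : α ∈ Set.Icc (x t) (x s) := ⟨le_of_lt hlt, le_of_lt (hαβ.trans hsβ)⟩
      obtain ⟨t', ht', hxt'⟩ := intermediate_value_Icc' hst
        (hcont.mono (Set.Icc_subset_Icc le_rfl (le_trans (le_of_lt htt₂) ht₂u))) this
      exact absurd (csInf_le hS₂bdd ⟨⟨ht'.1, le_trans ht'.2 (le_trans (le_of_lt htt₂) ht₂u)⟩, hxt'⟩)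
        (not_le.mpr (lt_of_le_of_lt ht'.2 htt₂))
  -- last hitting time of β in [s,t₂]
  set S₁ : Set ℝ := Set.Icc s t₂ ∩ x ⁻¹' {β} with hS₁def
  have hcont2 : ContinuousOn x (Set.Icc s t₂) :=
    hcont.mono (Set.Icc_subset_Icc le_rfl ht₂u)
  have hS₁ne : S₁.Nonempty := by
    have : β ∈ Set.Icc (x t₂) (x s) := ⟨hxt₂ ▸ le_of_lt hαβ, le_of_lt hsβ⟩
    obtain ⟨t, ht, hxt⟩ := intermediate_value_Icc' ht₂s hcont2 this
    exact ⟨t, ht, hxt⟩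
  have hS₁cl : IsClosed S₁ := hcont2.preimage_isClosed_of_isClosed isClosed_Icc isClosed_singleton
  have hS₁bdd : BddAbove S₁ := ⟨t₂, fun t ht => ht.1.2⟩
  set t₁ := sSup S₁ with ht₁def
  have ht₁mem : t₁ ∈ S₁ := hS₁cl.csSup_mem hS₁ne hS₁bdd
  have ht₁s : s ≤ t₁ := ht₁mem.1.1
  have ht₁t₂ : t₁ ≤ t₂ := ht₁mem.1.2
  have hxt₁ : x t₁ = β := ht₁mem.2
  refine ⟨t₁, t₂, le_trans hsT ht₁s, le_trans hs0 ht₁s, ht₁t₂, hxt₁, hxt₂, ?_⟩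
  intro t ht
  constructor
  · rcases eq_or_lt_of_le ht.2 with heq | hlt
    · rw [heq, hxt₂]
    · exact le_of_lt (hmin t (le_trans ht₁s ht.1) hlt)
  · by_contra h
    push_neg at h
    have htt₂ : t < t₂ := by
      rcases eq_or_lt_of_le ht.2 with heq | hlt
      · rw [heq, hxt₂] at h; exact absurd (hαβ.trans h) (lt_irrefl _)
      · exact hlt
    have : β ∈ Set.Icc (x t₂) (x t) := ⟨hxt₂ ▸ le_of_lt hαβ, le_of_lt h⟩
    obtain ⟨t', ht', hxt'⟩ := intermediate_value_Icc' (le_of_lt htt₂)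
      (hcont2.mono (Set.Icc_subset_Icc (le_trans ht₁s ht.1) le_rfl)) this
    have ht'S₁ : t' ∈ S₁ := ⟨⟨le_trans (le_trans ht₁s ht.1) ht'.1, ht'.2⟩, hxt'⟩
    have ht't₁ : t' ≤ t₁ := le_csSup hS₁bdd ht'S₁
    have htt₁ : t = t₁ := le_antisymm (le_trans ht'.1 ht't₁) ht.1
    rw [htt₁, hxt₁] at h
    exact lt_irrefl β h

theorem continuous_perturbed_mann_converges
    (f θ r x x' : ℝ → ℝ)
    (hfc : ContinuousOn f (Set.Icc 0 1))
    (hfm : Set.MapsTo f (Set.Icc 0 1) (Set.Icc 0 1))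
    (hθc : ContinuousOn θ (Set.Ici 0))
    (hθ0 : ∀ t ∈ Set.Ici (0:ℝ), 0 ≤ θ t)
    (hrc : ContinuousOn r (Set.Ici 0))
    (hx : ∀ t ∈ Set.Ici (0:ℝ), x t ∈ Set.Icc (0:ℝ) 1)
    (hderiv : ∀ t ∈ Set.Ici (0:ℝ), HasDerivAt x (x' t) t)
    (hx'c : ContinuousOn x' (Set.Ici 0))
    (hode : ∀ t ∈ Set.Ici (0:ℝ), x' t + θ t * x t = θ t * f (x t) + r t)
    (h1 : Tendsto (fun t => r t / θ t) atTop (nhds 0))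
    (h2 : Tendsto (fun T => ∫ t in (0:ℝ)..T, θ t) atTop atTop)
    (h3 : ∃ L : ℝ, Tendsto (fun T => ∫ t in (0:ℝ)..T, r t) atTop (nhds L)) :
    ∃ p ∈ Set.Icc (0:ℝ) 1, f p = p ∧ Tendsto x atTop (nhds p) := by
  have hxc : ContinuousOn x (Set.Ici 0) :=
    fun t ht => ((hderiv t ht).continuousAt).continuousWithinAt
  set g : ℝ → ℝ := fun t => θ t * (f (x t) - x t) + r t with hgdef
  have hgc : ContinuousOn g (Set.Ici 0) :=
    (hθc.mul ((hfc.comp hxc (fun t ht => hx t ht)).sub hxc)).add hrc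
  have hx'eq : ∀ t ∈ Set.Ici (0:ℝ), x' t = g t := by
    intro t ht
    have h := hode t ht
    have hring : θ t * (f (x t) - x t) = θ t * f (x t) - θ t * x t := by ring
    simp only [hgdef]
    linarith
  have hsub : ∀ t₁ t₂ : ℝ, 0 ≤ t₁ → t₁ ≤ t₂ → Set.uIcc t₁ t₂ ⊆ Set.Ici 0 := by
    intro t₁ t₂ h0 h12
    rw [Set.uIcc_of_le h12]
    exact fun t ht => le_trans h0 ht.1
  have hgint : ∀ t₁ t₂ : ℝ, 0 ≤ t₁ → t₁ ≤ t₂ →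
      IntervalIntegrable g MeasureTheory.volume t₁ t₂ :=
    fun t₁ t₂ h0 h12 => (hgc.mono (hsub t₁ t₂ h0 h12)).intervalIntegrable
  have hrint : ∀ t₁ t₂ : ℝ, 0 ≤ t₁ → t₁ ≤ t₂ →
      IntervalIntegrable r MeasureTheory.volume t₁ t₂ :=
    fun t₁ t₂ h0 h12 => (hrc.mono (hsub t₁ t₂ h0 h12)).intervalIntegrable
  have hθint : ∀ t₁ t₂ : ℝ, 0 ≤ t₁ → t₁ ≤ t₂ →
      IntervalIntegrable θ MeasureTheory.volume t₁ t₂ :=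
    fun t₁ t₂ h0 h12 => (hθc.mono (hsub t₁ t₂ h0 h12)).intervalIntegrable
  have key : ∀ t₁ t₂ : ℝ, 0 ≤ t₁ → t₁ ≤ t₂ → x t₂ - x t₁ = ∫ t in t₁..t₂, g t := by
    intro t₁ t₂ h0 h12
    rw [← intervalIntegral.integral_eq_sub_of_hasDerivAt (f := x) (f' := g)
      (fun t ht => ?_) (hgint t₁ t₂ h0 h12)]
    have h := hderiv t (hsub t₁ t₂ h0 h12 ht)
    rwa [hx'eq t (hsub t₁ t₂ h0 h12 ht)] at h
  have hrcauchy : ∀ ε > (0:ℝ), ∃ T ≥ (0:ℝ), ∀ t₁ t₂, T ≤ t₁ → t₁ ≤ t₂ →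
      |∫ t in t₁..t₂, r t| < ε := by
    obtain ⟨L, hL⟩ := h3
    intro ε hε
    obtain ⟨N, hN⟩ := Metric.tendsto_atTop.mp hL (ε/2) (by linarith)
    refine ⟨max N 0, le_max_right _ _, fun t₁ t₂ h1' h12 => ?_⟩
    have h10 : (0:ℝ) ≤ t₁ := le_trans (le_max_right N 0) h1'
    have h20 : (0:ℝ) ≤ t₂ := le_trans h10 h12
    rw [← intervalIntegral.integral_interval_sub_left (hrint 0 t₂ le_rfl h20)
      (hrint 0 t₁ le_rfl h10)]
    have d1 := hN t₁ (le_trans (le_max_left N 0) h1')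
    have d2 := hN t₂ (le_trans (le_max_left N 0) (le_trans h1' h12))
    rw [Real.dist_eq] at d1 d2
    calc |(∫ t in (0:ℝ)..t₂, r t) - ∫ t in (0:ℝ)..t₁, r t|
        ≤ |(∫ t in (0:ℝ)..t₂, r t) - L| + |L - ∫ t in (0:ℝ)..t₁, r t| := abs_sub_le _ _ _
      _ < ε := by rw [abs_sub_comm L] ; linarith
  have hev0 : ∀ᶠ t in (atTop : Filter ℝ), (0:ℝ) ≤ t := eventually_ge_atTop 0
  have hbd1 : IsBoundedUnder (· ≤ ·) atTop x :=
    ⟨1, eventually_map.2 <| by filter_upwards [hev0] with t ht using (hx t ht).2⟩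
  have hbd2 : IsBoundedUnder (· ≥ ·) atTop x :=
    ⟨0, eventually_map.2 <| by filter_upwards [hev0] with t ht using (hx t ht).1⟩
  set A := liminf x atTop with hAdef
  set B := limsup x atTop with hBdef
  have hAB : A ≤ B := liminf_le_limsup hbd1 hbd2
  have hB1 : B ≤ 1 := limsup_le_of_le hbd2.isCobounded_flip
    (by filter_upwards [hev0] with t ht using (hx t ht).2)
  have hA0 : (0:ℝ) ≤ A := le_liminf_of_le hbd1.isCobounded_flip
    (by filter_upwards [hev0] with t ht using (hx t ht).1)
  have hfreq_lt : ∀ c, A < c → ∀ T : ℝ, ∃ t, T ≤ t ∧ 0 ≤ t ∧ x t < c := by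
    intro c hc T
    have hfr := frequently_lt_of_liminf_lt hbd1.isCobounded_flip hc
    obtain ⟨t, hp, hq⟩ := (hfr.and_eventually (eventually_ge_atTop (max T 0))).exists
    exact ⟨t, le_trans (le_max_left _ _) hq, le_trans (le_max_right _ _) hq, hp⟩
  have hfreq_gt : ∀ c, c < B → ∀ T : ℝ, ∃ t, T ≤ t ∧ 0 ≤ t ∧ c < x t := by
    intro c hc T
    have hfr := frequently_lt_of_lt_limsup hbd2.isCobounded_flip hc
    obtain ⟨t, hp, hq⟩ := (hfr.and_eventually (eventually_ge_atTop (max T 0))).exists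
    exact ⟨t, le_trans (le_max_left _ _) hq, le_trans (le_max_right _ _) hq, hp⟩
  have hBA : B ≤ A := by
    by_contra hlt
    push_neg at hlt
    by_cases hcase : ∃ y ∈ Set.Ioo A B, f y < y
    · obtain ⟨y, hy, hfy⟩ := hcase
      have hy01 : y ∈ Set.Icc (0:ℝ) 1 :=
        ⟨le_trans hA0 (le_of_lt hy.1), le_trans (le_of_lt hy.2) hB1⟩
      obtain ⟨δ, hδ, hband⟩ : ∃ δ > 0, ∀ z ∈ Set.Icc (0:ℝ) 1, dist z y < δ → f z < z := by
        have hc := hfc y hy01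
        rw [Metric.continuousWithinAt_iff] at hc
        obtain ⟨δ, hδ, hc⟩ := hc ((y - f y)/2) (by linarith)
        refine ⟨min δ ((y - f y)/2), lt_min hδ (by linarith), fun z hz hdist => ?_⟩
        have hd1 := hc hz (lt_of_lt_of_le hdist (min_le_left _ _))
        have hd2 : dist z y < (y - f y)/2 := lt_of_lt_of_le hdist (min_le_right _ _)
        rw [Real.dist_eq] at hd1 hd2
        have e1 := abs_lt.mp hd1
        have e2 := abs_lt.mp hd2
        linarith [e1.1, e1.2, e2.1, e2.2]
      set η := min (δ/2) (min ((y - A)/2) ((B - y)/2)) with hηdef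
      have hηδ : η ≤ δ/2 := min_le_left _ _
      have hηA : η ≤ (y - A)/2 := le_trans (min_le_right _ _) (min_le_left _ _)
      have hηB : η ≤ (B - y)/2 := le_trans (min_le_right _ _) (min_le_right _ _)
      have hη : 0 < η := lt_min (by linarith)
        (lt_min (by linarith [hy.1]) (by linarith [hy.2]))
      have hAα : A < y - η := by linarith [hy.1]
      have hβB : y + η < B := by linarith [hy.2]
      obtain ⟨T, hT0, hTr⟩ := hrcauchy (2*η) (by linarith)
      obtain ⟨t₁, t₂, hTt₁, ht₁0, ht₁₂, hnx₁, hnx₂, hmem⟩ :=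
        crossing_lemma (fun t => - x t) hxc.neg (-(y+η)) (-(y-η)) (by linarith)
          (fun T' => by
            obtain ⟨t, ha, hb, hcc⟩ := hfreq_gt (y+η) hβB T'
            exact ⟨t, ha, hb, show -x t < -(y+η) by linarith⟩)
          (fun T' => by
            obtain ⟨t, ha, hb, hcc⟩ := hfreq_lt (y-η) hAα T'
            exact ⟨t, ha, hb, show -(y-η) < -x t by linarith⟩) T
      simp only [neg_inj] at hnx₁ hnx₂
      have hmem' : ∀ t ∈ Set.Icc t₁ t₂, y - η ≤ x t ∧ x t ≤ y + η := by
        intro t ht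
        obtain ⟨hm1, hm2⟩ := hmem t ht
        exact ⟨by linarith, by linarith⟩
      have hkey := key t₁ t₂ ht₁0 ht₁₂
      have hmono : (∫ t in t₁..t₂, g t) ≤ ∫ t in t₁..t₂, r t := by
        apply intervalIntegral.integral_mono_on ht₁₂ (hgint t₁ t₂ ht₁0 ht₁₂)
          (hrint t₁ t₂ ht₁0 ht₁₂)
        intro t ht
        have ht0 : (0:ℝ) ≤ t := le_trans ht₁0 ht.1
        have hm := hmem' t ht
        have hf := hband (x t) (hx t ht0)
          (by rw [Real.dist_eq, abs_lt]; constructor <;> linarith [hm.1, hm.2])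
        have hθt := hθ0 t ht0
        have : θ t * (f (x t) - x t) ≤ 0 :=
          mul_nonpos_of_nonneg_of_nonpos hθt (by linarith)
        simp only [hgdef]
        linarith
      have habs := abs_lt.mp (hTr t₁ t₂ hTt₁ ht₁₂)
      rw [hnx₂, hnx₁] at hkey
      linarith [habs.1, habs.2]
    · push_neg at hcase
      set α := A + (B - A)/3 with hαdef
      set β := B - (B - A)/3 with hβdef
      have hαβ : α < β := by simp only [hαdef, hβdef]; linarith
      obtain ⟨T, hT0, hTr⟩ := hrcauchy (β - α) (by linarith)
      obtain ⟨t₁, t₂, hTt₁, ht₁0, ht₁₂, hx₁, hx₂, hmem⟩ :=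
        crossing_lemma x hxc α β hαβ
          (fun T' => hfreq_lt α (by simp only [hαdef]; linarith) T')
          (fun T' => hfreq_gt β (by simp only [hβdef]; linarith) T') T
      have hkey := key t₁ t₂ ht₁0 ht₁₂
      have hmono : (∫ t in t₁..t₂, r t) ≤ ∫ t in t₁..t₂, g t := by
        apply intervalIntegral.integral_mono_on ht₁₂ (hrint t₁ t₂ ht₁0 ht₁₂)
          (hgint t₁ t₂ ht₁0 ht₁₂)
        intro t ht
        have hm := hmem t ht
        have hyf := hcase (x t)
          ⟨lt_of_lt_of_le (by simp only [hαdef]; linarith) hm.1,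
           lt_of_le_of_lt hm.2 (by simp only [hβdef]; linarith)⟩
        have hθt := hθ0 t (le_trans ht₁0 ht.1)
        have : 0 ≤ θ t * (f (x t) - x t) := mul_nonneg hθt (by linarith)
        simp only [hgdef]
        linarith
      have habs := abs_lt.mp (hTr t₁ t₂ hTt₁ ht₁₂)
      rw [hx₁, hx₂] at hkey
      linarith [habs.1, habs.2]
  have hABeq : A = B := le_antisymm hAB hBA
  have hp : Tendsto x atTop (nhds A) := tendsto_of_liminf_eq_limsup rfl hABeq.symm hbd1 hbd2
  have hp01 : A ∈ Set.Icc (0:ℝ) 1 := ⟨hA0, hABeq ▸ hB1⟩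
  obtain ⟨L, hL⟩ := h3
  have hθtend : ∀ T' : ℝ, 0 ≤ T' → Tendsto (fun S => ∫ t in T'..S, θ t) atTop atTop := by
    intro T' hT'0
    have hev : (fun S => (∫ t in (0:ℝ)..S, θ t) - ∫ t in (0:ℝ)..T', θ t) =ᶠ[atTop]
        (fun S => ∫ t in T'..S, θ t) := by
      filter_upwards [eventually_ge_atTop T'] with S hS
      exact intervalIntegral.integral_interval_sub_left
        (hθint 0 S le_rfl (le_trans hT'0 hS)) (hθint 0 T' le_rfl hT'0)
    exact Tendsto.congr' hev (tendsto_atTop_add_const_right atTop _ h2)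
  have hrtend : ∀ T' : ℝ, 0 ≤ T' →
      Tendsto (fun S => ∫ t in T'..S, r t) atTop (nhds (L - ∫ t in (0:ℝ)..T', r t)) := by
    intro T' hT'0
    have hev : (fun S => (∫ t in (0:ℝ)..S, r t) - ∫ t in (0:ℝ)..T', r t) =ᶠ[atTop]
        (fun S => ∫ t in T'..S, r t) := by
      filter_upwards [eventually_ge_atTop T'] with S hS
      exact intervalIntegral.integral_interval_sub_left
        (hrint 0 S le_rfl (le_trans hT'0 hS)) (hrint 0 T' le_rfl hT'0)
    exact Tendsto.congr' hev (hL.sub_const _)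
  have hfp : f A = A := by
    rcases lt_trichotomy (f A) A with hlt | heq | hgt
    · exfalso
      set δ₂ := (A - f A)/2 with hδ₂def
      have hδ₂ : 0 < δ₂ := by simp only [hδ₂def]; linarith
      obtain ⟨η, hη, hband⟩ : ∃ η > 0, ∀ z ∈ Set.Icc (0:ℝ) 1, dist z A < η →
          f z - z ≤ -δ₂ := by
        have hc := hfc A hp01
        rw [Metric.continuousWithinAt_iff] at hc
        obtain ⟨δ, hδ, hc⟩ := hc (δ₂/2) (by linarith)
        refine ⟨min δ (δ₂/2), lt_min hδ (by linarith), fun z hz hd => ?_⟩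
        have hd1 := hc hz (lt_of_lt_of_le hd (min_le_left _ _))
        have hd2 : dist z A < δ₂/2 := lt_of_lt_of_le hd (min_le_right _ _)
        rw [Real.dist_eq] at hd1 hd2
        have e1 := abs_lt.mp hd1
        have e2 := abs_lt.mp hd2
        simp only [hδ₂def] at *
        linarith [e1.1, e1.2, e2.1, e2.2]
      obtain ⟨T, hT⟩ := eventually_atTop.mp ((Metric.tendsto_nhds.mp hp η hη).and hev0)
      set T' := max T 0 with hT'def
      have hT'0 : (0:ℝ) ≤ T' := le_max_right _ _
      have hineq : ∀ S, T' ≤ S →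
          x S - x T' ≤ -δ₂ * (∫ t in T'..S, θ t) + ∫ t in T'..S, r t := by
        intro S hS
        rw [key T' S hT'0 hS]
        have hint2 : IntervalIntegrable (fun t => -δ₂ * θ t + r t) MeasureTheory.volume T' S :=
          ((hθint T' S hT'0 hS).const_mul _).add (hrint T' S hT'0 hS)
        have hmono := intervalIntegral.integral_mono_on hS (hgint T' S hT'0 hS) hint2 ?_
        · rw [intervalIntegral.integral_add ((hθint T' S hT'0 hS).const_mul _)
            (hrint T' S hT'0 hS), intervalIntegral.integral_const_mul] at hmono
          exact hmono
        · intro t ht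
          have hTt := hT t (le_trans (le_max_left T 0) ht.1)
          have ht0 : (0:ℝ) ≤ t := le_trans hT'0 ht.1
          have hf := hband (x t) (hx t ht0) hTt.1
          have hθt := hθ0 t ht0
          have hmul : θ t * (f (x t) - x t) ≤ θ t * (-δ₂) :=
            mul_le_mul_of_nonneg_left hf hθt
          simp only [hgdef]
          nlinarith
      have hbot : Tendsto (fun S => -δ₂ * (∫ t in T'..S, θ t) + ∫ t in T'..S, r t)
          atTop atBot :=
        Filter.Tendsto.atBot_add
          ((hθtend T' hT'0).const_mul_atTop_of_neg (by linarith)) (hrtend T' hT'0)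
      obtain ⟨S, hS1, hS2⟩ :=
        ((hbot.eventually (eventually_lt_atBot (-1))).and (eventually_ge_atTop T')).exists
      have hI := hineq S hS2
      have hxS := hx S (le_trans hT'0 hS2)
      have hxT := hx T' hT'0
      linarith [hxS.1, hxT.2]
    · exact heq
    · exfalso
      set δ₂ := (f A - A)/2 with hδ₂def
      have hδ₂ : 0 < δ₂ := by simp only [hδ₂def]; linarith
      obtain ⟨η, hη, hband⟩ : ∃ η > 0, ∀ z ∈ Set.Icc (0:ℝ) 1, dist z A < η →
          δ₂ ≤ f z - z := by
        have hc := hfc A hp01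
        rw [Metric.continuousWithinAt_iff] at hc
        obtain ⟨δ, hδ, hc⟩ := hc (δ₂/2) (by linarith)
        refine ⟨min δ (δ₂/2), lt_min hδ (by linarith), fun z hz hd => ?_⟩
        have hd1 := hc hz (lt_of_lt_of_le hd (min_le_left _ _))
        have hd2 : dist z A < δ₂/2 := lt_of_lt_of_le hd (min_le_right _ _)
        rw [Real.dist_eq] at hd1 hd2
        have e1 := abs_lt.mp hd1
        have e2 := abs_lt.mp hd2
        simp only [hδ₂def] at *
        linarith [e1.1, e1.2, e2.1, e2.2]
      obtain ⟨T, hT⟩ := eventually_atTop.mp ((Metric.tendsto_nhds.mp hp η hη).and hev0)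
      set T' := max T 0 with hT'def
      have hT'0 : (0:ℝ) ≤ T' := le_max_right _ _
      have hineq : ∀ S, T' ≤ S →
          δ₂ * (∫ t in T'..S, θ t) + (∫ t in T'..S, r t) ≤ x S - x T' := by
        intro S hS
        rw [key T' S hT'0 hS]
        have hint2 : IntervalIntegrable (fun t => δ₂ * θ t + r t) MeasureTheory.volume T' S :=
          ((hθint T' S hT'0 hS).const_mul _).add (hrint T' S hT'0 hS)
        have hmono := intervalIntegral.integral_mono_on hS hint2 (hgint T' S hT'0 hS) ?_
        · rw [intervalIntegral.integral_add ((hθint T' S hT'0 hS).const_mul _)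
            (hrint T' S hT'0 hS), intervalIntegral.integral_const_mul] at hmono
          exact hmono
        · intro t ht
          have hTt := hT t (le_trans (le_max_left T 0) ht.1)
          have ht0 : (0:ℝ) ≤ t := le_trans hT'0 ht.1
          have hf := hband (x t) (hx t ht0) hTt.1
          have hθt := hθ0 t ht0
          have hmul : θ t * δ₂ ≤ θ t * (f (x t) - x t) :=
            mul_le_mul_of_nonneg_left hf hθt
          simp only [hgdef]
          nlinarith
      have htop : Tendsto (fun S => δ₂ * (∫ t in T'..S, θ t) + ∫ t in T'..S, r t)
          atTop atTop :=
        Filter.Tendsto.atTop_add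
          ((hθtend T' hT'0).const_mul_atTop hδ₂) (hrtend T' hT'0)
      obtain ⟨S, hS1, hS2⟩ :=
        ((htop.eventually (eventually_gt_atTop 1)).and (eventually_ge_atTop T')).exists
      have hI := hineq S hS2
      have hxS := hx S (le_trans hT'0 hS2)
      have hxT := hx T' hT'0
      linarith [hxS.2, hxT.1]
  exact ⟨A, hp01, hfp, hp⟩
end

section
/- If {xₙ} is a bounded real sequence with x_{n+1} − xₙ → 0, then there exist real numbers a ≤ b such that the omega limit set of {xₙ} equals the closed interval [a,b]. -/
open Filter Set Topology

/-- The omega limit set of a real sequence: the set of subsequential limits. -/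
def omegaSeq (x : ℕ → ℝ) : Set ℝ :=
  {z : ℝ | ∃ φ : ℕ → ℕ, StrictMono φ ∧ Tendsto (x ∘ φ) atTop (nhds z)}

lemma mem_omegaSeq_iff (x : ℕ → ℝ) (z : ℝ) :
    z ∈ omegaSeq x ↔ ∀ ε > (0:ℝ), ∀ N : ℕ, ∃ n ≥ N, |x n - z| < ε := by
  constructor
  · rintro ⟨φ, hφ, htendsto⟩ ε hε N
    have := (Metric.tendsto_atTop.mp htendsto) ε hε
    obtain ⟨K, hK⟩ := this
    refine ⟨φ (max K N), le_trans (le_max_right K N) (hφ.le_apply), ?_⟩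
    have := hK (max K N) (le_max_left K N)
    simpa [Real.dist_eq] using this
  · intro hz
    have hcl : MapClusterPt z atTop x := by
      rw [mapClusterPt_iff_frequently]
      intro s hs
      obtain ⟨ε, hε, hball⟩ := Metric.mem_nhds_iff.mp hs
      rw [frequently_atTop]
      intro N
      obtain ⟨n, hn, hlt⟩ := hz ε hε N
      exact ⟨n, hn, hball (by simpa [Real.dist_eq] using hlt)⟩
    exact TopologicalSpace.FirstCountableTopology.tendsto_subseq hcl

theorem omegaSeq_eq_Icc (x : ℕ → ℝ)
    (hb : ∃ C : ℝ, ∀ n, |x n| ≤ C)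
    (h : Tendsto (fun n => x (n + 1) - x n) atTop (nhds 0)) :
    ∃ a b : ℝ, a ≤ b ∧ omegaSeq x = Set.Icc a b := by
  obtain ⟨C, hC⟩ := hb
  set S := omegaSeq x with hS
  -- nonempty
  have hmem : ∀ n, x n ∈ Icc (-C) C := fun n => abs_le.mp (hC n)
  have hne : S.Nonempty := by
    obtain ⟨a, _, φ, hφ, ht⟩ :=
      tendsto_subseq_of_bounded (Metric.isBounded_Icc (-C) C) hmem
    exact ⟨a, φ, hφ, ht⟩
  -- bounded
  have hsub : S ⊆ Icc (-C) C := by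
    rintro z ⟨φ, hφ, ht⟩
    exact isClosed_Icc.mem_of_tendsto ht (Eventually.of_forall fun n => hmem _)
  -- closed
  have hclosed : IsClosed S := by
    refine isClosed_of_closure_subset ?_
    intro z hzcl
    rw [hS, mem_omegaSeq_iff]
    intro ε hε N
    obtain ⟨w, hwS, hwz⟩ := Metric.mem_closure_iff.mp hzcl (ε/2) (by linarith)
    obtain ⟨n, hn, hlt⟩ := (mem_omegaSeq_iff x w).mp hwS (ε/2) (by linarith) N
    refine ⟨n, hn, ?_⟩
    have : |x n - z| ≤ |x n - w| + |w - z| := abs_sub_le _ _ _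
    rw [Real.dist_eq] at hwz
    have hzw : |w - z| < ε/2 := by rwa [abs_sub_comm] at hwz
    linarith
  -- order connected
  have hord : S.OrdConnected := by
    constructor
    rintro a haS b hbS c ⟨hac, hcb⟩
    rw [hS, mem_omegaSeq_iff]
    intro ε hε N
    -- get M with small steps
    obtain ⟨M₀, hM₀⟩ := Metric.tendsto_atTop.mp h ε hε
    set M := max M₀ N with hM
    have hstep : ∀ n ≥ M, |x (n+1) - x n| < ε := by
      intro n hn
      have := hM₀ n (le_trans (le_max_left _ _) hn)
      simpa [Real.dist_eq] using this
    obtain ⟨p, hp, hpa⟩ := (mem_omegaSeq_iff x a).mp haS ε hε M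
    obtain ⟨q, hq, hqb⟩ := (mem_omegaSeq_iff x b).mp hbS ε hε (p + 1)
    have hNp : N ≤ p := le_trans (le_max_right _ _) hp
    by_cases hcase : c - ε < x p
    · -- x p is within ε of c
      refine ⟨p, hNp, ?_⟩
      have h1 : x p < a + ε := by
        have := abs_lt.mp hpa; linarith [this.2]
      rw [abs_lt]
      constructor <;> linarith
    · push_neg at hcase  -- x p ≤ c - ε
      have hxq : c - ε < x q := by
        have := abs_lt.mp hqb; linarith [this.1]
      have hex : ∃ k, c - ε < x (p + k) := ⟨q - p, by
        rwa [Nat.add_sub_cancel' (le_of_lt (Nat.lt_of_succ_le hq))]⟩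
      set n₀ := Nat.find hex with hn₀
      have hspec : c - ε < x (p + n₀) := Nat.find_spec hex
      have hn₀pos : 0 < n₀ := by
        rcases Nat.eq_zero_or_pos n₀ with h0 | h0
        · exfalso; rw [h0] at hspec; simp at hspec; linarith
        · exact h0
      have hmin : ¬ (c - ε < x (p + (n₀ - 1))) := Nat.find_min hex (Nat.sub_lt hn₀pos one_pos)
      push_neg at hmin
      have hstepbound : |x (p + (n₀ - 1) + 1) - x (p + (n₀ - 1))| < ε :=
        hstep _ (le_trans hp (Nat.le_add_right _ _))
      have heq : p + (n₀ - 1) + 1 = p + n₀ := by omega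
      rw [heq] at hstepbound
      refine ⟨p + n₀, le_trans hNp (Nat.le_add_right _ _), ?_⟩
      have h2 : x (p + n₀) < x (p + (n₀ - 1)) + ε := by
        have := abs_lt.mp hstepbound; linarith [this.2]
      rw [abs_lt]
      constructor <;> linarith
  -- compact
  have hcompact : IsCompact S := isCompact_Icc.of_isClosed_subset hclosed hsub
  have hconn : IsConnected S := ⟨hne, hord.isPreconnected⟩
  have heq := eq_Icc_of_connected_compact hconn hcompact
  refine ⟨sInf S, sSup S, ?_, heq⟩
  have := hne
  rw [heq] at this
  exact nonempty_Icc.mp this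
end

section
/- Let u : [0,∞) → ℝ be continuous and bounded with ω(u) = [a,b], a < b. Then for any c, d with a < c < d < b and any T₀ > 0, there exist s₁, τ₁ with τ₁ > s₁ > T₀ such that u(s₁) = c, u(τ₁) = d, and u(t) ∈ [c,d] for all t ∈ [s₁, τ₁]. -/
open Filter Set Topology

/-- The omega limit set of a continuous-time real function: limits of u(t_n) along t_n → ∞. -/
def omegaFun (u : ℝ → ℝ) : Set ℝ :=
  {z : ℝ | ∃ t : ℕ → ℝ, Tendsto t atTop atTop ∧ Tendsto (u ∘ t) atTop (nhds z)}

theorem crossing_up (u : ℝ → ℝ) (a b : ℝ)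
    (huc : ContinuousOn u (Set.Ici 0))
    (hub : ∃ C : ℝ, ∀ t ∈ Set.Ici (0:ℝ), |u t| ≤ C)
    (hab : a < b) (hω : omegaFun u = Set.Icc a b)
    (c d : ℝ) (hac : a < c) (hcd : c < d) (hdb : d < b)
    (T₀ : ℝ) (hT₀ : 0 < T₀) :
    ∃ s₁ τ₁ : ℝ, T₀ < s₁ ∧ s₁ < τ₁ ∧ u s₁ = c ∧ u τ₁ = d ∧
      ∀ t ∈ Set.Icc s₁ τ₁, u t ∈ Set.Icc c d := by
  have haω : a ∈ omegaFun u := by rw [hω]; exact ⟨le_refl a, hab.le⟩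
  have hbω : b ∈ omegaFun u := by rw [hω]; exact ⟨hab.le, le_refl b⟩
  obtain ⟨ta, hta, huta⟩ : ∃ ta, T₀ < ta ∧ u ta < c := by
    obtain ⟨t, ht, hut⟩ := haω
    have h1 : ∀ᶠ n in atTop, T₀ < t n := ht.eventually_gt_atTop T₀
    have h2 : ∀ᶠ n in atTop, u (t n) < c := hut.eventually_lt_const hac
    obtain ⟨n, hn1, hn2⟩ := (h1.and h2).exists
    exact ⟨t n, hn1, hn2⟩
  obtain ⟨tb, htb, hutb⟩ : ∃ tb, ta < tb ∧ d < u tb := by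
    obtain ⟨t, ht, hut⟩ := hbω
    have h1 : ∀ᶠ n in atTop, ta < t n := ht.eventually_gt_atTop ta
    have h2 : ∀ᶠ n in atTop, d < u (t n) := hut.eventually_const_lt hdb
    obtain ⟨n, hn1, hn2⟩ := (h1.and h2).exists
    exact ⟨t n, hn1, hn2⟩
  have hta0 : 0 ≤ ta := (hT₀.trans hta).le
  have htab : ta ≤ tb := htb.le
  have hsub : Icc ta tb ⊆ Ici 0 := fun x hx => hta0.trans hx.1
  have hucab : ContinuousOn u (Icc ta tb) := huc.mono hsub
  -- first time hitting d
  set S : Set ℝ := Icc ta tb ∩ u ⁻¹' {d} with hSdef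
  have hScl : IsClosed S := hucab.preimage_isClosed_of_isClosed isClosed_Icc isClosed_singleton
  have hScomp : IsCompact S := isCompact_Icc.of_isClosed_subset hScl inter_subset_left
  have hSne : S.Nonempty := by
    obtain ⟨x, hx, hux⟩ := intermediate_value_Icc htab hucab ⟨(huta.trans hcd).le, hutb.le⟩
    exact ⟨x, hx, hux⟩
  set τ₁ := sInf S with hτdef
  have hτS : τ₁ ∈ S := hScomp.sInf_mem hSne
  obtain ⟨hτmem, huτ⟩ := hτS
  have huτ : u τ₁ = d := huτ
  -- below τ₁, u < d
  have hlt_d : ∀ x ∈ Ico ta τ₁, u x < d := by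
    rintro x ⟨hx1, hx2⟩
    by_contra h
    push_neg at h
    have hxtb : x ≤ tb := hx2.le.trans hτmem.2
    obtain ⟨y, hy, huy⟩ := intermediate_value_Icc hx1 (hucab.mono (Icc_subset_Icc le_rfl hxtb))
      ⟨(huta.trans hcd).le, h⟩
    have : τ₁ ≤ y := csInf_le hScomp.bddBelow ⟨⟨hy.1, hy.2.trans hxtb⟩, huy⟩
    exact (this.trans hy.2).not_gt hx2
  -- last time hitting c before τ₁
  have htaτ : ta ≤ τ₁ := hτmem.1
  have hucaτ : ContinuousOn u (Icc ta τ₁) := hucab.mono (Icc_subset_Icc le_rfl hτmem.2)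
  set S₂ : Set ℝ := Icc ta τ₁ ∩ u ⁻¹' {c} with hS₂def
  have hS₂cl : IsClosed S₂ := hucaτ.preimage_isClosed_of_isClosed isClosed_Icc isClosed_singleton
  have hS₂comp : IsCompact S₂ := isCompact_Icc.of_isClosed_subset hS₂cl inter_subset_left
  have hS₂ne : S₂.Nonempty := by
    obtain ⟨x, hx, hux⟩ := intermediate_value_Icc htaτ hucaτ ⟨huta.le, by rw [huτ]; exact hcd.le⟩
    exact ⟨x, hx, hux⟩
  set s₁ := sSup S₂ with hsdef
  have hsS : s₁ ∈ S₂ := hS₂comp.sSup_mem hS₂ne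
  obtain ⟨hsmem, hus⟩ := hsS
  have hus : u s₁ = c := hus
  have hsτ : s₁ < τ₁ := lt_of_le_of_ne hsmem.2 (fun h => by
    rw [h, huτ] at hus; exact absurd hus hcd.ne')
  -- above s₁, u > c
  have hgt_c : ∀ x ∈ Ioc s₁ τ₁, c < u x := by
    rintro x ⟨hx1, hx2⟩
    by_contra h
    push_neg at h
    have hxta : ta ≤ x := hsmem.1.trans hx1.le
    obtain ⟨y, hy, huy⟩ := intermediate_value_Icc hx2
      (hucaτ.mono (Icc_subset_Icc hxta le_rfl)) ⟨h, by rw [huτ]; exact hcd.le⟩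
    have : y ≤ s₁ := le_csSup hS₂comp.bddAbove ⟨⟨hxta.trans hy.1, hy.2⟩, huy⟩
    exact absurd ((hx1.trans_le hy.1).trans_le this) (lt_irrefl s₁)
  refine ⟨s₁, τ₁, hta.trans_le hsmem.1, hsτ, hus, huτ, ?_⟩
  rintro t ⟨ht1, ht2⟩
  constructor
  · rcases eq_or_lt_of_le ht1 with h | h
    · rw [← h, hus]
    · exact (hgt_c t ⟨h, ht2⟩).le
  · rcases eq_or_lt_of_le ht2 with h | h
    · rw [h, huτ]
    · exact (hlt_d t ⟨hsmem.1.trans ht1, h⟩).le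
end

section
/- Let u : [0,∞) → ℝ be continuous and bounded with ω(u) = [a,b], a < b. Then for any c, d with a < c < d < b and any T₀ > 0, there exist s₂, τ₂ with τ₂ > s₂ > T₀ such that u(s₂) = d, u(τ₂) = c, and u(t) ∈ [c,d] for all t ∈ [s₂, τ₂]. -/
open Filter Set Topology

theorem crossing_down (u : ℝ → ℝ) (a b : ℝ)
    (huc : ContinuousOn u (Set.Ici 0))
    (hub : ∃ C : ℝ, ∀ t ∈ Set.Ici (0:ℝ), |u t| ≤ C)
    (hab : a < b) (hω : omegaFun u = Set.Icc a b)
    (c d : ℝ) (hac : a < c) (hcd : c < d) (hdb : d < b)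
    (T₀ : ℝ) (hT₀ : 0 < T₀) :
    ∃ s₂ τ₂ : ℝ, T₀ < s₂ ∧ s₂ < τ₂ ∧ u s₂ = d ∧ u τ₂ = c ∧
      ∀ t ∈ Set.Icc s₂ τ₂, u t ∈ Set.Icc c d := by
  have hbω : b ∈ omegaFun u := by rw [hω]; exact ⟨le_of_lt hab, le_refl b⟩
  have haω : a ∈ omegaFun u := by rw [hω]; exact ⟨le_refl a, le_of_lt hab⟩
  obtain ⟨tb, htb, hutb⟩ := hbω
  obtain ⟨ta, hta, huta⟩ := haω
  have h1 : ∀ᶠ n in atTop, d < u (tb n) := hutb.eventually (eventually_gt_nhds hdb)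
  have h2 : ∀ᶠ n in atTop, T₀ < tb n := htb.eventually (eventually_gt_atTop T₀)
  obtain ⟨n₁, hn1, hn2⟩ := (h1.and h2).exists
  set t₁ := tb n₁ with ht₁
  have h3 : ∀ᶠ n in atTop, u (ta n) < c := huta.eventually (eventually_lt_nhds hac)
  have h4 : ∀ᶠ n in atTop, t₁ < ta n := hta.eventually (eventually_gt_atTop t₁)
  obtain ⟨n₂, hm1, hm2⟩ := (h3.and h4).exists
  set t₂ := ta n₂ with ht₂
  have ht₁pos : 0 < t₁ := hT₀.trans hn2
  have hsub : Icc t₁ t₂ ⊆ Ici (0:ℝ) := fun x hx => le_trans ht₁pos.le hx.1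
  have hcont : ContinuousOn u (Icc t₁ t₂) := huc.mono hsub
  have ht12 : t₁ ≤ t₂ := hm2.le
  -- first hitting time of c
  set S : Set ℝ := Icc t₁ t₂ ∩ u ⁻¹' {c} with hSdef
  have hScl : IsClosed S := hcont.preimage_isClosed_of_isClosed isClosed_Icc isClosed_singleton
  have hSne : S.Nonempty := by
    have : c ∈ Icc (u t₂) (u t₁) := ⟨hm1.le, (hcd.trans hn1).le⟩
    obtain ⟨x, hx, hux⟩ := intermediate_value_Icc' ht12 hcont this
    exact ⟨x, hx, hux⟩
  have hSbdd : BddBelow S := ⟨t₁, fun x hx => hx.1.1⟩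
  set τ₂ := sInf S with hτdef
  have hτmem : τ₂ ∈ S := hScl.csInf_mem hSne hSbdd
  have hτIcc : τ₂ ∈ Icc t₁ t₂ := hτmem.1
  have huτ : u τ₂ = c := hτmem.2
  -- u ≥ c on [t₁, τ₂]
  have hge : ∀ t ∈ Icc t₁ τ₂, c ≤ u t := by
    intro t ht
    by_contra hlt
    push_neg at hlt
    have hcontt : ContinuousOn u (Icc t₁ t) := hcont.mono (Icc_subset_Icc le_rfl (ht.2.trans hτIcc.2))
    have : c ∈ Icc (u t) (u t₁) := ⟨hlt.le, (hcd.trans hn1).le⟩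
    obtain ⟨x, hx, hux⟩ := intermediate_value_Icc' ht.1 hcontt this
    have hxS : x ∈ S := ⟨⟨hx.1, le_trans hx.2 (ht.2.trans hτIcc.2)⟩, hux⟩
    have : τ₂ ≤ x := csInf_le hSbdd hxS
    have htlt : t < τ₂ := lt_of_le_of_ne ht.2 (fun h => by
      rw [h] at hlt; exact absurd huτ (ne_of_lt hlt))
    exact absurd (lt_of_le_of_lt hx.2 htlt) (not_lt.mpr this)
  -- last hitting time of d before τ₂
  set S' : Set ℝ := Icc t₁ τ₂ ∩ u ⁻¹' {d} with hS'def
  have hcont' : ContinuousOn u (Icc t₁ τ₂) := hcont.mono (Icc_subset_Icc le_rfl hτIcc.2)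
  have hS'cl : IsClosed S' := hcont'.preimage_isClosed_of_isClosed isClosed_Icc isClosed_singleton
  have hS'ne : S'.Nonempty := by
    have : d ∈ Icc (u τ₂) (u t₁) := by rw [huτ]; exact ⟨hcd.le, hn1.le⟩
    obtain ⟨x, hx, hux⟩ := intermediate_value_Icc' hτIcc.1 hcont' this
    exact ⟨x, hx, hux⟩
  have hS'bdd : BddAbove S' := ⟨τ₂, fun x hx => hx.1.2⟩
  set s₂ := sSup S' with hsdef
  have hsmem : s₂ ∈ S' := hS'cl.csSup_mem hS'ne hS'bdd
  have hsIcc : s₂ ∈ Icc t₁ τ₂ := hsmem.1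
  have hus : u s₂ = d := hsmem.2
  have hsτ : s₂ < τ₂ := lt_of_le_of_ne hsIcc.2 (fun h => by
    rw [h, huτ] at hus; exact absurd hus (ne_of_lt hcd))
  refine ⟨s₂, τ₂, lt_of_lt_of_le hn2 hsIcc.1, hsτ, hus, huτ, ?_⟩
  intro t ht
  refine ⟨hge t ⟨le_trans hsIcc.1 ht.1, ht.2⟩, ?_⟩
  by_contra hgt
  push_neg at hgt
  have hconts : ContinuousOn u (Icc t τ₂) :=
    hcont'.mono (Icc_subset_Icc (le_trans hsIcc.1 ht.1) le_rfl)
  have : d ∈ Icc (u τ₂) (u t) := by rw [huτ]; exact ⟨hcd.le, hgt.le⟩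
  obtain ⟨x, hx, hux⟩ := intermediate_value_Icc' ht.2 hconts this
  have hxS' : x ∈ S' := ⟨⟨le_trans hsIcc.1 (le_trans ht.1 hx.1), hx.2⟩, hux⟩
  have hxle : x ≤ s₂ := le_csSup hS'bdd hxS'
  have hts : s₂ < t := lt_of_le_of_ne ht.1 (fun h => by
    rw [← h, hus] at hgt; exact absurd hgt (lt_irrefl d))
  exact absurd (lt_of_lt_of_le hts hx.1) (not_lt.mpr hxle)
end
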